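/- arXiv:1812.10242 — 2 statements merged into one kernel-verified Lean document; each statement's English description precedes it below -/
import Mathlib

section
/- Fix a field k and let n, m ∈ ℕ with m ≠ n and m ≠ n + 1. Then every short exact sequence 0 → B^m → E → B^n → 0 of (not necessarily smooth) k[I]-modules splits; that is, if a k[I]-module E has a submodule N isomorphic to B^m with E/N isomorphic to B^n, then N is a direct summand of E as a k[I]-module. -/
open scoped Classical

noncomputable section

/-- The increasing monoid `I`: the submonoid of `Function.End ℕ+` (functions under
composition) consisting of strictly increasing functions `σ : ℕ+ → ℕ+` such that
`σ n = n + ℓ` for some `ℓ` and all sufficiently large `n`. -/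
def IncMonoid : Submonoid (Function.End ℕ+) where
  carrier := {f | StrictMono f ∧ ∃ (l : ℕ) (N : ℕ+), ∀ n : ℕ+, N ≤ n → ((f n : ℕ) = (n : ℕ) + l)}
  one_mem' := ⟨fun _ _ h => h, 0, 1, fun n _ => by show ((n : ℕ+) : ℕ) = (n : ℕ) + 0; omega⟩
  mul_mem' := by
    rintro f g ⟨hf1, lf, Nf, hf2⟩ ⟨hg1, lg, Ng, hg2⟩
    refine ⟨hf1.comp hg1, lg + lf, max Nf Ng, fun n hn => ?_⟩
    have h1 : (g n : ℕ) = (n : ℕ) + lg := hg2 n (le_trans (le_max_right _ _) hn)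
    have h2 : Nf ≤ g n := by
      rw [← PNat.coe_le_coe, h1]
      have : (Nf : ℕ) ≤ (n : ℕ) := (PNat.coe_le_coe _ _).2 (le_trans (le_max_left _ _) hn)
      omega
    have h3 := hf2 (g n) h2
    show ((f (g n) : ℕ)) = (n : ℕ) + (lg + lf)
    omega

/-- The increasing monoid, as a type. -/
abbrev IncM : Type := IncMonoid

theorem IncM.strictMono (σ : IncM) : StrictMono σ.1 := σ.2.1

theorem IncM.le_apply (σ : IncM) (n : ℕ+) : n ≤ σ.1 n := by
  induction n using PNat.recOn with
  | one => exact (σ.1 1).one_le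
  | succ n ih =>
      have h2 : σ.1 n < σ.1 (n + 1) := σ.strictMono (by rw [← PNat.coe_lt_coe]; push_cast; omega)
      rw [← PNat.coe_le_coe] at *
      rw [← PNat.coe_lt_coe] at h2
      push_cast at *
      omega

/-- The underlying function of the generator `α_k`. -/
def alphaFun (k : ℕ+) : Function.End ℕ+ := fun n => if n < k then n else n + 1

theorem alphaFun_strictMono (k : ℕ+) : StrictMono (alphaFun k) := by
  intro a b hab
  unfold alphaFun
  split_ifs with h1 h2 <;>
    rw [← PNat.coe_lt_coe] at * <;> push_cast at * <;> omega

theorem alphaFun_mem (k : ℕ+) : alphaFun k ∈ IncMonoid := by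
  refine ⟨alphaFun_strictMono k, 1, k, fun n hn => ?_⟩
  unfold alphaFun
  rw [if_neg (not_lt.2 hn)]
  push_cast
  ring

/-- The generator `α_k` of the increasing monoid (`k ≥ 1`). -/
def alpha (k : ℕ+) : IncM := ⟨alphaFun k, alphaFun_mem k⟩

/-- The submonoid `I_{≥ n}` of `I` generated by the `α_i` with `i ≥ n`. -/
def Iges (n : ℕ+) : Submonoid IncM := Submonoid.closure (alpha '' Set.Ici n)

/-- The submonoid `I_{> n}` of `I` generated by the `α_i` with `i > n`. -/
def Igt (n : ℕ) : Submonoid IncM := Submonoid.closure {s | ∃ i : ℕ+, n < (i : ℕ) ∧ s = alpha i}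

/-- The monoid algebra `k[I]` of the increasing monoid. -/
abbrev IncAlg (k : Type*) [Field k] : Type _ := MonoidAlgebra k IncM

/-- The image of `σ ∈ I` in the monoid algebra `k[I]`. -/
abbrev ofInc (k : Type*) [Field k] (σ : IncM) : IncAlg k := MonoidAlgebra.of k IncM σ

/-- A `k[I]`-module is smooth if every vector is fixed by some `I_{>n}`. -/
def IsSmoothMod (k : Type*) [Field k] (M : Type*) [AddCommMonoid M]
    [Module (IncAlg k) M] : Prop :=
  ∀ x : M, ∃ n : ℕ, ∀ σ ∈ Igt n, ofInc k σ • x = x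

/-! ### The principal modules `A^r` -/

/-- Index set for the basis of the principal module `A^r`:
strictly increasing `r`-tuples of positive integers. -/
def Idx (r : ℕ) : Type := {v : Fin r → ℕ+ // StrictMono v}

/-- The action of `σ ∈ I` on the index set of `A^r`. -/
def idxAct {r : ℕ} (σ : IncM) (t : Idx r) : Idx r :=
  ⟨σ.1 ∘ t.1, (IncM.strictMono σ).comp t.2⟩

/-- The representation of the increasing monoid on the principal module `A^r`. -/
def prinRep (k : Type*) [Field k] (r : ℕ) : Representation k IncM (Idx r →₀ k) where
  toFun σ := Finsupp.lmapDomain k k (idxAct σ)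
  map_one' := LinearMap.ext fun v => by
    have h : (idxAct (1 : IncM) : Idx r → Idx r) = id := funext fun t => rfl
    simp [Finsupp.lmapDomain_apply, h, Finsupp.mapDomain_id]
  map_mul' := fun σ τ => LinearMap.ext fun v => by
    have h : (idxAct (σ * τ) : Idx r → Idx r) = (idxAct σ) ∘ (idxAct τ) :=
      funext fun t => rfl
    show Finsupp.lmapDomain k k (idxAct (σ * τ)) v =
      Finsupp.lmapDomain k k (idxAct σ) (Finsupp.lmapDomain k k (idxAct τ) v)
    simp [Finsupp.lmapDomain_apply, h, Finsupp.mapDomain_comp]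

/-- The principal module `A^r`, as a module over the monoid algebra `k[I]`. -/
abbrev PrinMod (k : Type*) [Field k] (r : ℕ) : Type _ := (prinRep k r).asModule

/-- The basis vector `e_t` of the principal module `A^r`. -/
def ePrin (k : Type*) [Field k] {r : ℕ} (t : Idx r) : PrinMod k r :=
  (prinRep k r).asModuleEquiv.symm (Finsupp.single t 1)

/-- The tuple `(1, 2, …, r)` indexing the canonical generator `e_{1,…,r}` of `A^r`. -/
def iotaIdx (r : ℕ) : Idx r :=
  ⟨fun i => ⟨(i : ℕ) + 1, Nat.succ_pos _⟩, fun a b h => by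
    show (a : ℕ) + 1 < (b : ℕ) + 1; exact Nat.succ_lt_succ h⟩

/-! ### The simple modules `B^n` -/

/-- `σ ∈ I` fixes the natural number `n`, with the convention `σ 0 = 0`. -/
def fixesNat (σ : IncM) (n : ℕ) : Prop := ∀ h : 0 < n, σ.1 ⟨n, h⟩ = ⟨n, h⟩

theorem fixesNat_mul (σ τ : IncM) (n : ℕ) :
    fixesNat (σ * τ) n ↔ fixesNat σ n ∧ fixesNat τ n := by
  rcases Nat.eq_zero_or_pos n with h0 | h0
  · subst h0
    constructor
    · exact fun _ => ⟨fun h => absurd h (lt_irrefl 0), fun h => absurd h (lt_irrefl 0)⟩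
    · exact fun _ h => absurd h (lt_irrefl 0)
  · set p : ℕ+ := ⟨n, h0⟩
    have happ : ∀ h : 0 < n, (σ * τ).1 ⟨n, h⟩ = σ.1 (τ.1 ⟨n, h⟩) := fun _ => rfl
    constructor
    · intro h
      have hfix : σ.1 (τ.1 p) = p := h h0
      have h1 : p ≤ τ.1 p := τ.le_apply p
      have h2 : τ.1 p ≤ σ.1 (τ.1 p) := σ.le_apply _
      have hτp : τ.1 p = p := le_antisymm (h2.trans_eq hfix) h1
      have hσp : σ.1 p = p := by rw [hτp] at hfix; exact hfix
      exact ⟨fun _ => hσp, fun _ => hτp⟩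
    · rintro ⟨hσ, hτ⟩ h
      rw [happ h]
      have := hτ h0
      rw [this, hσ h0]

/-- The representation of the increasing monoid on the simple module `B^n`:
`σ` acts by the identity if `σ(n) = n` (with `σ(0) = 0`) and by `0` otherwise. -/
def bRep (k : Type*) [Field k] (n : ℕ) : Representation k IncM k where
  toFun σ := if fixesNat σ n then 1 else 0
  map_one' := by
    rw [if_pos]
    intro h
    rfl
  map_mul' := fun σ τ => by
    by_cases hσ : fixesNat σ n
    · by_cases hτ : fixesNat τ n
      · rw [if_pos ((fixesNat_mul σ τ n).2 ⟨hσ, hτ⟩), if_pos hσ, if_pos hτ, one_mul]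
      · rw [if_neg (fun h => hτ ((fixesNat_mul σ τ n).1 h).2), if_pos hσ, if_neg hτ, one_mul]
    · by_cases hτ : fixesNat τ n
      · rw [if_neg (fun h => hσ ((fixesNat_mul σ τ n).1 h).1), if_neg hσ, if_pos hτ, mul_one]
      · rw [if_neg (fun h => hσ ((fixesNat_mul σ τ n).1 h).1), if_neg hσ, if_neg hτ, mul_zero]

/-- The simple module `B^n`, as a module over the monoid algebra `k[I]`. -/
abbrev BMod (k : Type*) [Field k] (n : ℕ) : Type _ := (bRep k n).asModule


/-!
Choose a generator `f` of `N ≅ B^m` and a lift `e ∈ E` of a generator of `E/N ≅ B^n`, and write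
`σ • e = χₙ(σ) e + d(σ) f`, where `χⱼ` is the character of `B^j`. Then `d` is a twisted derivation,
`d(στ) = χₙ(τ) d(σ) + χₘ(σ) d(τ)`, and if `d = λ (χₙ - χₘ)` the vector `e + λ f` spans a complement
of `N`. The monoid `I` is generated by the `α_i`: peeling `α_t` off the right of `σ`, at the first
point `t` that `σ` moves, lowers the eventual shift of `σ`. So a twisted derivation is determined by
its values on the `α_i`, and for `m ∉ {n, n + 1}` the relations `α_a α_c = α_{c+1} α_a` (`a ≤ c`)
force these values to be `λ (χₙ(α_i) - χₘ(α_i))`, with `λ = -d(α_{m+1})` if `m < n` and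
`λ = d(α_{n+1})` if `m ≥ n + 2`.
-/

section TwistedDerivation

variable {G k : Type*} [Monoid G] [CommRing k]

def IsTwistedDerivation (χ ψ d : G → k) : Prop :=
  ∀ g h, d (g * h) = χ h * d g + ψ g * d h

lemma isTwistedDerivation_inner (χ ψ : G →* k) (c : k) :
    IsTwistedDerivation χ ψ fun g => c * (χ g - ψ g) := by
  intro g h
  simp only [map_mul]
  ring

namespace IsTwistedDerivation

variable {χ ψ : G →* k} {d e : G → k}

lemma sub (hd : IsTwistedDerivation χ ψ d) (he : IsTwistedDerivation χ ψ e) :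
    IsTwistedDerivation χ ψ (d - e) := by
  intro g h
  simp only [Pi.sub_apply, hd g h, he g h]
  ring

lemma map_one (hd : IsTwistedDerivation χ ψ d) : d 1 = 0 := by
  have h := hd 1 1
  simp only [mul_one, MonoidHom.map_one, one_mul] at h
  linear_combination -h

lemma eq_zero_of_closure_eq_top (hd : IsTwistedDerivation χ ψ d) {s : Set G}
    (hs : Submonoid.closure s = ⊤) (h0 : ∀ g ∈ s, d g = 0) : d = 0 := by
  ext g
  have hg : g ∈ Submonoid.closure s := hs ▸ Submonoid.mem_top g
  induction hg using Submonoid.closure_induction with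
  | mem g hg => exact h0 g hg
  | one => exact hd.map_one
  | mul g h _ _ ihg ihh => simp [hd g h, ihg, ihh]

lemma eq_of_eqOn_closure (hd : IsTwistedDerivation χ ψ d) (he : IsTwistedDerivation χ ψ e)
    {s : Set G} (hs : Submonoid.closure s = ⊤) (h : Set.EqOn d e s) : d = e :=
  sub_eq_zero.1 <| (hd.sub he).eq_zero_of_closure_eq_top hs fun _ hg => sub_eq_zero.2 (h hg)

end IsTwistedDerivation

end TwistedDerivation

section Splitting

open MonoidAlgebra

variable {k G : Type*} [Field k] [Monoid G]

lemma exists_eigenbasis_of_linearEquiv_asModule {M : Type*} [AddCommGroup M]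
    [Module (MonoidAlgebra k G) M] [Module k M] [IsScalarTower k (MonoidAlgebra k G) M]
    (ρ : Representation k G k) (φ : M ≃ₗ[MonoidAlgebra k G] ρ.asModule) :
    ∃ b : M, b ≠ 0 ∧ (∀ x : M, ∃ r : k, x = r • b) ∧ ∀ g, of k G g • b = ρ g 1 • b := by
  have he : ∀ r : k, ρ.asModuleEquiv.symm r = r • ρ.asModuleEquiv.symm 1 := fun r => by
    rw [← map_smul, smul_eq_mul, mul_one]
  refine ⟨φ.symm (ρ.asModuleEquiv.symm 1), by simp, fun x => ⟨ρ.asModuleEquiv (φ x), ?_⟩,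
    fun g => ?_⟩
  · rw [← LinearMapClass.map_smul_of_tower, ← he, LinearEquiv.symm_apply_apply,
      LinearEquiv.symm_apply_apply]
  · rw [← map_smul, ← Representation.asModuleEquiv_symm_map_rho, he,
      LinearMapClass.map_smul_of_tower]

variable {E : Type*} [AddCommGroup E] [Module (MonoidAlgebra k G) E] [Module k E]
  [IsScalarTower k (MonoidAlgebra k G) E]

lemma exists_eq_smul_of_mem_span_eigenvector {v x : E} {χ : G → k}
    (hv : ∀ g, of k G g • v = χ g • v) (hx : x ∈ Submodule.span (MonoidAlgebra k G) {v}) :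
    ∃ r : k, x = r • v := by
  obtain ⟨a, rfl⟩ := Submodule.mem_span_singleton.1 hx
  clear hx
  induction a using MonoidAlgebra.induction_on with
  | of g => exact ⟨χ g, hv g⟩
  | add a b ha hb =>
    obtain ⟨r, hr⟩ := ha
    obtain ⟨s, hs⟩ := hb
    exact ⟨r + s, by rw [add_smul, hr, hs, add_smul]⟩
  | smul r a ha =>
    obtain ⟨s, hs⟩ := ha
    exact ⟨r * s, by rw [smul_assoc, hs, smul_smul]⟩

lemma isCompl_span_eigenvector (N : Submodule (MonoidAlgebra k G) E) {v : E} {χ : G → k}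
    (hv : ∀ g, of k G g • v = χ g • v) (hv0 : N.mkQ v ≠ 0)
    (hspan : ∀ y : E ⧸ N, ∃ r : k, y = r • N.mkQ v) :
    IsCompl N (Submodule.span (MonoidAlgebra k G) {v}) := by
  constructor
  · rw [Submodule.disjoint_def]
    intro x hxN hxv
    obtain ⟨r, rfl⟩ := exists_eq_smul_of_mem_span_eigenvector hv hxv
    have : r • N.mkQ v = 0 := by
      rw [← LinearMapClass.map_smul_of_tower, Submodule.mkQ_apply,
        Submodule.Quotient.mk_eq_zero]
      exact hxN
    rw [(smul_eq_zero.1 this).resolve_right hv0, zero_smul]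
  · rw [codisjoint_iff, Submodule.eq_top_iff']
    intro x
    obtain ⟨r, hr⟩ := hspan (N.mkQ x)
    have hxN : x - r • v ∈ N := by
      rw [← Submodule.Quotient.mk_eq_zero, ← Submodule.mkQ_apply, map_sub,
        LinearMapClass.map_smul_of_tower, hr, sub_self]
    rw [← sub_add_cancel x (r • v)]
    exact Submodule.add_mem_sup hxN
      (Submodule.smul_of_tower_mem _ r (Submodule.mem_span_singleton_self v))

theorem exists_isCompl_of_forall_isTwistedDerivation (ψ ρ : Representation k G k)
    (hinner : ∀ d : G → k, IsTwistedDerivation (fun g => ρ g 1) (fun g => ψ g 1) d →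
      ∃ c : k, ∀ g, d g = c * (ρ g 1 - ψ g 1))
    (N : Submodule (MonoidAlgebra k G) E) (φ : N ≃ₗ[MonoidAlgebra k G] ψ.asModule)
    (θ : (E ⧸ N) ≃ₗ[MonoidAlgebra k G] ρ.asModule) :
    ∃ C : Submodule (MonoidAlgebra k G) E, IsCompl N C := by
  obtain ⟨f, hf0, hfspan, hf⟩ := exists_eigenbasis_of_linearEquiv_asModule ψ φ
  obtain ⟨b, hb0, hbspan, hb⟩ := exists_eigenbasis_of_linearEquiv_asModule ρ θ
  obtain ⟨e, rfl⟩ := N.mkQ_surjective b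
  have hcoeff : ∀ g, ∃ r : k, of k G g • e = ρ g 1 • e + r • (f : E) := by
    intro g
    have hmem : of k G g • e - ρ g 1 • e ∈ N := by
      rw [← Submodule.Quotient.mk_eq_zero, ← Submodule.mkQ_apply, map_sub, map_smul,
        LinearMapClass.map_smul_of_tower, hb, sub_self]
    obtain ⟨r, hr⟩ := hfspan ⟨_, hmem⟩
    exact ⟨r, eq_add_of_sub_eq' (congrArg Subtype.val hr)⟩
  choose d hd using hcoeff
  have hf' : ∀ g, of k G g • (f : E) = ψ g 1 • (f : E) := fun g => congrArg Subtype.val (hf g)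
  have hf_inj : Function.Injective fun r : k => r • (f : E) :=
    smul_left_injective k (Subtype.coe_injective.ne hf0)
  have hfq : (Submodule.Quotient.mk (f : E) : E ⧸ N) = 0 := (Submodule.Quotient.mk_eq_zero N).2 f.2
  have hder : IsTwistedDerivation (fun g => ρ g 1) (fun g => ψ g 1) d := by
    intro g h
    apply hf_inj
    have hρ : ρ (g * h) 1 = ρ h 1 * ρ g 1 := by
      rw [map_mul, Module.End.mul_apply, ← smul_eq_mul, ← map_smul, smul_eq_mul, mul_one]
    calc d (g * h) • (f : E) = of k G (g * h) • e - ρ (g * h) 1 • e := by rw [hd]; abel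
      _ = (ρ h 1 * d g + ψ g 1 * d h) • (f : E) := by
        rw [map_mul, mul_smul, hd h, smul_add, smul_comm, hd g, smul_comm, hf', hρ]
        module
  obtain ⟨c, hc⟩ := hinner d hder
  refine ⟨_, isCompl_span_eigenvector N (v := e + c • (f : E)) (χ := fun g => ρ g 1) ?_ ?_ ?_⟩
  · intro g
    rw [smul_add, hd, smul_comm, hf', hc]
    module
  · simpa [hfq] using hb0
  · simpa [hfq] using hbspan

end Splitting

namespace IncM

lemma mul_apply (σ τ : IncM) (j : ℕ+) : (σ * τ).1 j = σ.1 (τ.1 j) := rfl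

lemma ext {σ τ : IncM} (h : ∀ j, σ.1 j = τ.1 j) : σ = τ := Subtype.ext (funext h)

lemma alpha_apply (i j : ℕ+) : (alpha i).1 j = if j < i then j else j + 1 := rfl

lemma apply_add_le (σ : IncM) {p q : ℕ+} (h : p ≤ q) : (σ.1 p : ℕ) + q ≤ σ.1 q + p := by
  have hf : StrictMono fun n : ℕ => (σ.1 n.succPNat : ℕ) :=
    fun a b hab => σ.strictMono (Nat.succPNat_lt_succPNat.2 hab)
  have key := hf.add_le_nat (q.natPred - p.natPred) p.natPred
  rw [Nat.sub_add_cancel (PNat.natPred_le_natPred.2 h)] at key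
  simp only [PNat.succPNat_natPred] at key
  have := PNat.natPred_add_one p
  have := PNat.natPred_add_one q
  omega

lemma apply_eq_self_of_le (σ : IncM) {p q : ℕ+} (h : p ≤ q) (hq : σ.1 q = q) : σ.1 p = p := by
  refine le_antisymm ?_ (σ.le_apply p)
  have := σ.apply_add_le h
  rw [hq] at this
  exact PNat.coe_le_coe _ _ |>.1 (by omega)

lemma exists_eq_mul_alpha (σ : IncM) {t : ℕ+} (hfix : ∀ j < t, σ.1 j = j) (ht : t < σ.1 t)
    {ℓ : ℕ} {N : ℕ+} (hN : ∀ j, N ≤ j → (σ.1 j : ℕ) = j + (ℓ + 1)) :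
    ∃ τ : IncM, (∀ j, N + t ≤ j → (τ.1 j : ℕ) = j + ℓ) ∧ σ = τ * alpha t := by
  have coe_pred : ∀ j : ℕ+, t < j → ((j - 1 : ℕ+) : ℕ) = j - 1 := fun j h => by
    rw [PNat.sub_coe, if_pos (one_le.trans_lt h)]; rfl
  let f : Function.End ℕ+ := fun j => if j ≤ t then j else σ.1 (j - 1)
  have hf_mono : StrictMono f := by
    intro a b hab
    simp only [f]
    split_ifs with ha hb hb
    · exact hab
    · refine ha.trans_lt (ht.trans_le (σ.strictMono.monotone ?_))
      rw [← PNat.coe_le_coe, coe_pred b (not_le.1 hb)]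
      rw [← PNat.coe_le_coe] at hb; omega
    · exact absurd (hab.le.trans hb) ha
    · apply σ.strictMono
      rw [← PNat.coe_lt_coe, coe_pred a (not_le.1 ha), coe_pred b (not_le.1 hb)]
      rw [← PNat.coe_lt_coe] at hab; rw [← PNat.coe_le_coe] at ha; omega
  have hf_shift : ∀ j, N + t ≤ j → (f j : ℕ) = j + ℓ := by
    intro j hj
    rw [← PNat.coe_le_coe, PNat.add_coe] at hj
    have hjt : t < j := by rw [← PNat.coe_lt_coe]; have := N.pos; omega
    simp only [f, if_neg (not_le.2 hjt)]
    rw [hN (j - 1) (by rw [← PNat.coe_le_coe, coe_pred j hjt]; have := t.pos; omega),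
      coe_pred j hjt]
    have := j.pos; omega
  refine ⟨⟨f, hf_mono, ℓ, N + t, hf_shift⟩, hf_shift, ext fun j => ?_⟩
  show σ.1 j = f (if j < t then j else j + 1)
  split_ifs with hj
  · simp only [f, if_pos hj.le, hfix j hj]
  · have hjt : ¬ j + 1 ≤ t := fun h => hj ((PNat.lt_add_right j 1).trans_le h)
    have hsucc : j + 1 - 1 = j := PNat.coe_injective (by rw [coe_pred _ (not_le.1 hjt)]; simp)
    simp only [f, if_neg hjt, hsucc]

theorem closure_range_alpha : Submonoid.closure (Set.range alpha) = ⊤ := by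
  rw [eq_top_iff]
  rintro σ -
  obtain ⟨ℓ, N, hN⟩ := σ.2.2
  induction ℓ generalizing σ N with
  | zero =>
    have hle : ∀ j : ℕ+, j ≤ N + j := fun j => by rw [← PNat.coe_le_coe]; simp
    have hle' : ∀ j : ℕ+, N ≤ N + j := fun j => by rw [← PNat.coe_le_coe]; simp
    obtain rfl : σ = 1 := ext fun j =>
      σ.apply_eq_self_of_le (hle j) (PNat.coe_injective (hN _ (hle' j)))
    exact one_mem _
  | succ ℓ ih =>
    have hmoved : σ.1 N ≠ N := fun h => by have := hN N le_rfl; rw [h] at this; omega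
    obtain ⟨t, ht, hmin⟩ := wellFounded_lt.has_min {j | σ.1 j ≠ j} ⟨N, hmoved⟩
    obtain ⟨τ, hτ, rfl⟩ := σ.exists_eq_mul_alpha (fun j hj => not_not.1 fun h => hmin j h hj)
      ((σ.le_apply t).lt_of_ne (Ne.symm ht)) hN
    exact mul_mem (ih (N + t) hτ) (Submonoid.subset_closure ⟨t, rfl⟩)

lemma alpha_mul_alpha {a c : ℕ+} (h : a ≤ c) : alpha a * alpha c = alpha (c + 1) * alpha a := by
  refine ext fun j => ?_
  simp only [mul_apply, alpha_apply]
  rw [← PNat.coe_le_coe] at h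
  split_ifs <;> simp only [← PNat.coe_lt_coe, ← PNat.coe_inj, PNat.add_coe, PNat.one_coe] at * <;>
    omega

end IncM

lemma fixesNat_one (n : ℕ) : fixesNat 1 n := fun _ => rfl

lemma fixesNat_coe_iff (σ : IncM) (p : ℕ+) : fixesNat σ p ↔ σ.1 p = p :=
  ⟨fun h => h p.pos, fun h _ => h⟩

lemma fixesNat_alpha (i : ℕ+) (n : ℕ) : fixesNat (alpha i) n ↔ n = 0 ∨ n < i := by
  rcases n.eq_zero_or_pos with rfl | hn
  · simp [fixesNat]
  · lift n to ℕ+ using hn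
    rw [fixesNat_coe_iff, IncM.alpha_apply, PNat.coe_lt_coe]
    split_ifs with h <;> simp [h, ← PNat.coe_inj]

def bChar (k : Type*) [Field k] (n : ℕ) : IncM →* k where
  toFun σ := if fixesNat σ n then 1 else 0
  map_one' := if_pos (fixesNat_one n)
  map_mul' σ τ := by
    simp only [fixesNat_mul, ite_and]
    split_ifs <;> simp

lemma bRep_apply_one (k : Type*) [Field k] (n : ℕ) (σ : IncM) : bRep k n σ 1 = bChar k n σ := by
  by_cases h : fixesNat σ n <;> simp [bRep, bChar, h]

section Derivations

variable {k : Type*} [Field k] {n m : ℕ}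

lemma bChar_alpha_of_lt {i : ℕ+} (h : n < i) : bChar k n (alpha i) = 1 :=
  if_pos ((fixesNat_alpha i n).2 (Or.inr h))

lemma bChar_alpha_of_le {i : ℕ+} (h : (i : ℕ) ≤ n) : bChar k n (alpha i) = 0 :=
  if_neg fun hfix => by have := i.pos; rcases (fixesNat_alpha i n).1 hfix with h' | h' <;> omega

namespace IsTwistedDerivation

variable {d : IncM → k} (hd : IsTwistedDerivation (bChar k n) (bChar k m) d)
include hd

lemma alpha_relation {a c : ℕ+} (h : a ≤ c) :
    bChar k n (alpha c) * d (alpha a) + bChar k m (alpha a) * d (alpha c) =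
      bChar k n (alpha a) * d (alpha (c + 1)) + bChar k m (alpha (c + 1)) * d (alpha a) := by
  rw [← hd, ← hd, IncM.alpha_mul_alpha h]

lemma apply_alpha_of_lt (hmn : m < n) (i : ℕ+) :
    d (alpha i) = -d (alpha m.succPNat) * (bChar k n (alpha i) - bChar k m (alpha i)) := by
  have hp : (m.succPNat : ℕ) = m + 1 := rfl
  by_cases hi : (i : ℕ) ≤ m
  · have h := hd.alpha_relation (a := i) (c := m.succPNat) (PNat.coe_le_coe _ _ |>.1 (by omega))
    rw [bChar_alpha_of_le (n := n) (i := m.succPNat) (by omega), bChar_alpha_of_le (n := m) hi,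
      bChar_alpha_of_le (n := n) (i := i) (by omega),
      bChar_alpha_of_lt (n := m) (i := m.succPNat + 1) (by simp)] at h
    rw [bChar_alpha_of_le (n := n) (i := i) (by omega), bChar_alpha_of_le hi]
    linear_combination -h
  · have h := hd.alpha_relation (a := m.succPNat) (c := i) (PNat.coe_le_coe _ _ |>.1 (by omega))
    rw [bChar_alpha_of_lt (n := m) (i := m.succPNat) (by omega),
      bChar_alpha_of_le (n := n) (i := m.succPNat) (by omega),
      bChar_alpha_of_lt (n := m) (i := i + 1) (by simp; omega)] at h
    rw [bChar_alpha_of_lt (n := m) (i := i) (by omega)]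
    linear_combination h

lemma apply_alpha_of_add_two_le (hnm : n + 2 ≤ m) (i : ℕ+) :
    d (alpha i) = d (alpha n.succPNat) * (bChar k n (alpha i) - bChar k m (alpha i)) := by
  have hp : (n.succPNat : ℕ) = n + 1 := rfl
  rcases lt_trichotomy (i : ℕ) (n + 1) with hi | hi | hi
  · have h := hd.alpha_relation (a := i) (c := n.succPNat) (PNat.coe_le_coe _ _ |>.1 (by omega))
    rw [bChar_alpha_of_lt (n := n) (i := n.succPNat) (by omega),
      bChar_alpha_of_le (n := m) (i := i) (by omega),
      bChar_alpha_of_le (n := n) (i := i) (by omega),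
      bChar_alpha_of_le (n := m) (i := n.succPNat + 1) (by simp; omega)] at h
    rw [bChar_alpha_of_le (n := n) (i := i) (by omega),
      bChar_alpha_of_le (n := m) (i := i) (by omega)]
    linear_combination h
  · obtain rfl : i = n.succPNat := PNat.coe_injective hi
    rw [bChar_alpha_of_lt (n := n) (by omega), bChar_alpha_of_le (n := m) (by omega)]
    ring
  · obtain ⟨c, rfl⟩ := PNat.exists_eq_succ_of_ne_one (n := i) (by rintro rfl; simp at hi)
    have hc : n < (c : ℕ) := by simp at hi; omega
    have h := hd.alpha_relation (a := n.succPNat) (c := c) (PNat.coe_le_coe _ _ |>.1 (by omega))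
    rw [bChar_alpha_of_lt (n := n) (i := c) hc,
      bChar_alpha_of_le (n := m) (i := n.succPNat) (by omega),
      bChar_alpha_of_lt (n := n) (i := n.succPNat) (by omega)] at h
    rw [bChar_alpha_of_lt (n := n) (i := c + 1) (by simp; omega)]
    linear_combination -h

theorem exists_eq_inner_bChar (hmn : m ≠ n) (hmn' : m ≠ n + 1) :
    ∃ c : k, ∀ σ, d σ = c * (bChar k n σ - bChar k m σ) := by
  suffices ∃ c : k, ∀ i, d (alpha i) = c * (bChar k n (alpha i) - bChar k m (alpha i)) by
    obtain ⟨c, hc⟩ := this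
    exact ⟨c, congrFun (hd.eq_of_eqOn_closure (isTwistedDerivation_inner _ _ c)
      IncM.closure_range_alpha (by rintro _ ⟨i, rfl⟩; exact hc i))⟩
  rcases hmn.lt_or_gt with h | h
  · exact ⟨_, hd.apply_alpha_of_lt h⟩
  · exact ⟨_, hd.apply_alpha_of_add_two_le (by omega)⟩

end IsTwistedDerivation

end Derivations

/-- For `m ∉ {n, n+1}`, every extension of `B^n` by `B^m` splits:
if a `k[I]`-module `E` has a submodule `N ≅ B^m` with `E/N ≅ B^n`, then `N` is a
direct summand of `E`. -/
theorem extension_of_simples_splits (k : Type*) [Field k] (n m : ℕ)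
    (hm1 : m ≠ n) (hm2 : m ≠ n + 1)
    (E : Type*) [AddCommGroup E] [Module (IncAlg k) E]
    (N : Submodule (IncAlg k) E)
    (h1 : Nonempty (N ≃ₗ[IncAlg k] BMod k m))
    (h2 : Nonempty ((E ⧸ N) ≃ₗ[IncAlg k] BMod k n)) :
    ∃ C : Submodule (IncAlg k) E, IsCompl N C := by
  obtain ⟨φ⟩ := h1
  obtain ⟨θ⟩ := h2
  let : Module k E := Module.compHom E (algebraMap k (IncAlg k))
  have : IsScalarTower k (IncAlg k) E := ⟨fun r a x => by rw [Algebra.smul_def, mul_smul]; rfl⟩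
  refine exists_isCompl_of_forall_isTwistedDerivation (bRep k m) (bRep k n) (fun d hd => ?_) N φ θ
  simp only [bRep_apply_one] at hd ⊢
  exact hd.exists_eq_inner_bChar hm1 hm2

end
end

section
/- Fix a field k and let M be a smooth k[I]-module that is locally of finite length (equivalently, every cyclic k[I]-submodule of M is finite-dimensional over k). Then for every n ≥ 1, the composition M^{I_{≥n}} → M → M_{I_{≥n}} of the inclusion of invariants with the projection to coinvariants is an isomorphism of k-vector spaces; equivalently, M is the internal direct sum M = M^{I_{≥n}} ⊕ 𝔞_n M. -/
/-!
The cyclic submodule of `x` lies in the span of finitely many smooth vectors, hence is fixed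
pointwise by some `I_{>m}`.
For `g = α_n^{m+1}` the relations `α_j g = α_{n+m+1} g` (`n ≤ j ≤ n+m+1`) make `g x`
invariant under `I_{≥n}`, and `x = g x + (x - g x)` with `x - g x ∈ 𝔞_n M`. Conversely,
`α_n^s α_j = α_{j+s} α_n^s` for `j ≥ n` shows that `α_n^s` kills each generator `(τ - 1) w`
of `𝔞_n M` once `s` is large, so an invariant `y ∈ 𝔞_n M` satisfies `y = α_n^s y = 0`.
-/

open scoped Classical

noncomputable section

/-- The set of elements `(σ - 1) · x` of `M` with `σ ∈ I_{≥ n}`, `x ∈ M`. -/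
def augSet (k : Type*) (M : Type*) [Field k] [AddCommGroup M] [Module (IncAlg k) M]
    (n : ℕ+) : Set M :=
  {m | ∃ σ ∈ Iges n, ∃ x : M, m = ofInc k σ • x - x}

/-- `𝔞_n M`: the span of the elements `(σ - 1) · x` with `σ ∈ I_{≥ n}`, `x ∈ M`
(since this set of elements is stable under scaling by `k`, its `k`-span coincides
with the additive subgroup it generates). -/
def augGrp (k : Type*) (M : Type*) [Field k] [AddCommGroup M] [Module (IncAlg k) M]
    (n : ℕ+) : AddSubgroup M :=
  AddSubgroup.closure (augSet k M n)

/-- The set `M^{I_{≥ n}}` of `I_{≥ n}`-invariant vectors of `M`. -/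
def invSet (k : Type*) (M : Type*) [Field k] [AddCommMonoid M] [Module (IncAlg k) M]
    (S : Submonoid IncM) : Set M :=
  {x | ∀ σ ∈ S, ofInc k σ • x = x}

lemma IncM.ext_coe {σ τ : IncM} (h : ∀ x : ℕ+, (σ.1 x : ℕ) = τ.1 x) : σ = τ :=
  Subtype.ext <| funext fun x => PNat.coe_injective (h x)

lemma alpha_apply_coe (j x : ℕ+) :
    ((alpha j).1 x : ℕ) = if (x : ℕ) < j then (x : ℕ) else x + 1 := by
  change ((alphaFun j x : ℕ+) : ℕ) = _
  unfold alphaFun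
  by_cases h : x < j
  · rw [if_pos h, if_pos (by exact_mod_cast h)]
  · rw [if_neg h, if_neg (by exact_mod_cast h), PNat.add_coe, PNat.one_coe]

lemma alpha_pow_apply_coe (n : ℕ+) (s : ℕ) (x : ℕ+) :
    ((alpha n ^ s).1 x : ℕ) = if (x : ℕ) < n then (x : ℕ) else x + s := by
  induction s generalizing x with
  | zero => simp only [pow_zero]; split_ifs <;> rfl
  | succ s ih =>
    rw [pow_succ]
    change ((alpha n ^ s).1 ((alpha n).1 x) : ℕ) = _
    rw [ih]
    have := alpha_apply_coe n x
    split_ifs at * <;> omega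

lemma alpha_mul_alpha_pow {n j : ℕ+} (s : ℕ+) (hnj : n ≤ j) (hj : j ≤ n + s) :
    alpha j * alpha n ^ (s : ℕ) = alpha (n + s) * alpha n ^ (s : ℕ) := by
  refine IncM.ext_coe fun x => ?_
  change ((alpha j).1 ((alpha n ^ (s : ℕ)).1 x) : ℕ) =
    (alpha (n + s)).1 ((alpha n ^ (s : ℕ)).1 x)
  rw [← PNat.coe_le_coe, PNat.add_coe] at *
  simp only [alpha_pow_apply_coe, alpha_apply_coe, PNat.add_coe]
  split_ifs <;> omega

lemma alpha_pow_mul_alpha {n j : ℕ+} (s : ℕ+) (hnj : n ≤ j) :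
    alpha n ^ (s : ℕ) * alpha j = alpha (j + s) * alpha n ^ (s : ℕ) := by
  refine IncM.ext_coe fun x => ?_
  change ((alpha n ^ (s : ℕ)).1 ((alpha j).1 x) : ℕ) =
    (alpha (j + s)).1 ((alpha n ^ (s : ℕ)).1 x)
  rw [← PNat.coe_le_coe] at hnj
  have := alpha_apply_coe j x
  simp only [alpha_pow_apply_coe, alpha_apply_coe, PNat.add_coe]
  split_ifs at * <;> omega

lemma alpha_mem_Iges {n j : ℕ+} (h : n ≤ j) : alpha j ∈ Iges n :=
  Submonoid.subset_closure ⟨j, h, rfl⟩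

lemma Iges_le_Igt {n : ℕ+} {m : ℕ} (h : m < n) : Iges n ≤ Igt m :=
  Submonoid.closure_le.2 fun _ ⟨j, hj, hσ⟩ =>
    Submonoid.subset_closure ⟨j, h.trans_le (PNat.coe_le_coe _ _ |>.2 hj), hσ.symm⟩

lemma Igt_antitone : Antitone Igt := fun _ _ h =>
  Submonoid.closure_mono fun _ ⟨i, hi, hσ⟩ => ⟨i, h.trans_lt hi, hσ⟩

lemma exists_alpha_pow_mul_eq_mul_alpha_pow {n : ℕ+} (s : ℕ+) {τ : IncM}
    (hτ : τ ∈ Iges n) :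
    ∃ τ' ∈ Iges (n + s), alpha n ^ (s : ℕ) * τ = τ' * alpha n ^ (s : ℕ) := by
  induction hτ using Submonoid.closure_induction with
  | mem _ h =>
    obtain ⟨j, hj, rfl⟩ := h
    exact ⟨alpha (j + s), alpha_mem_Iges (add_le_add_left hj s), alpha_pow_mul_alpha s hj⟩
  | one => exact ⟨1, one_mem _, by rw [mul_one, one_mul]⟩
  | mul σ τ _ _ hσ hτ =>
    obtain ⟨σ', hσ', hσσ'⟩ := hσ
    obtain ⟨τ', hτ', hττ'⟩ := hτ
    exact ⟨σ' * τ', mul_mem hσ' hτ',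
      by rw [← mul_assoc, hσσ', mul_assoc, hττ', mul_assoc]⟩

section Module

variable {k : Type*} [Field k] {M : Type*} [AddCommGroup M] [Module (IncAlg k) M]

lemma ofInc_mul_smul (σ τ : IncM) (x : M) :
    ofInc k (σ * τ) • x = ofInc k σ • ofInc k τ • x := by
  rw [← mul_smul, ← map_mul]

variable (k) in
def incStabilizer (v : M) : Submonoid IncM where
  carrier := {σ | ofInc k σ • v = v}
  one_mem' := by
    change ofInc k 1 • v = v
    rw [show ofInc k 1 = 1 from map_one _, one_smul]
  mul_mem' {σ τ} hσ hτ := by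
    change ofInc k (σ * τ) • v = v
    rw [ofInc_mul_smul, hτ, hσ]

lemma mem_invSet_closure_iff {s : Set IncM} {v : M} :
    v ∈ invSet k M (Submonoid.closure s) ↔ ∀ σ ∈ s, ofInc k σ • v = v :=
  (Submonoid.closure_le (S := incStabilizer k v)).trans Iff.rfl

lemma invSet_antitone {S T : Submonoid IncM} (h : S ≤ T) : invSet k M T ⊆ invSet k M S :=
  fun _ hv σ hσ => hv σ (h hσ)

lemma sum_smul_mem_invSet {ι : Type*} (s : Finset ι) (c : ι → k) (v : ι → M)
    {S : Submonoid IncM} (hv : ∀ i ∈ s, v i ∈ invSet k M S) :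
    ∑ i ∈ s, algebraMap k (IncAlg k) (c i) • v i ∈ invSet k M S := by
  intro σ hσ
  rw [Finset.smul_sum]
  refine Finset.sum_congr rfl fun i hi => ?_
  rw [← mul_smul, ← Algebra.commutes, mul_smul, hv i hi σ hσ]

lemma exists_span_subset_invSet_Igt (hsm : IsSmoothMod k M) {x : M}
    (hx : ∃ (r : ℕ) (v : Fin r → M), ∀ y ∈ Submodule.span (IncAlg k) ({x} : Set M),
      ∃ c : Fin r → k, y = ∑ i, algebraMap k (IncAlg k) (c i) • v i) :
    ∃ m : ℕ, ∀ y ∈ Submodule.span (IncAlg k) ({x} : Set M), y ∈ invSet k M (Igt m) := by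
  obtain ⟨r, v, hv⟩ := hx
  choose b hb using fun i => hsm (v i)
  refine ⟨Finset.univ.sup b, fun y hy => ?_⟩
  obtain ⟨c, rfl⟩ := hv y hy
  exact sum_smul_mem_invSet _ c v fun i _ =>
    invSet_antitone (Igt_antitone (Finset.le_sup (Finset.mem_univ i))) (hb i)

lemma alpha_pow_smul_mem_invSet_Iges {n s : ℕ+} {m : ℕ} (hm : m < n + s) {x : M}
    (hx : ∀ y ∈ Submodule.span (IncAlg k) ({x} : Set M), y ∈ invSet k M (Igt m)) :
    ofInc k (alpha n ^ (s : ℕ)) • x ∈ invSet k M (Iges n) := by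
  have hfix := hx _
    (Submodule.smul_mem _ (ofInc k (alpha n ^ (s : ℕ))) (Submodule.mem_span_singleton_self x))
  refine mem_invSet_closure_iff.2 ?_
  rintro _ ⟨j, hnj, rfl⟩
  rcases le_or_gt j (n + s) with hj | hj
  · rw [← ofInc_mul_smul, alpha_mul_alpha_pow s hnj hj, ofInc_mul_smul]
    exact hfix _ (Iges_le_Igt (by rwa [PNat.add_coe]) (alpha_mem_Iges le_rfl))
  · exact hfix _ (Iges_le_Igt (hm.trans (PNat.coe_lt_coe _ _ |>.2 hj)) (alpha_mem_Iges le_rfl))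

lemma alpha_pow_smul_smul_of_mem_Iges {n s : ℕ+} {m : ℕ} (hm : m < n + s) {w : M}
    (hw : ∀ y ∈ Submodule.span (IncAlg k) ({w} : Set M), y ∈ invSet k M (Igt m))
    {τ : IncM} (hτ : τ ∈ Iges n) :
    ofInc k (alpha n ^ (s : ℕ)) • ofInc k τ • w = ofInc k (alpha n ^ (s : ℕ)) • w := by
  obtain ⟨τ', hτ', hcomm⟩ := exists_alpha_pow_mul_eq_mul_alpha_pow s hτ
  rw [← ofInc_mul_smul, hcomm, ofInc_mul_smul]
  have hfix := hw _
    (Submodule.smul_mem _ (ofInc k (alpha n ^ (s : ℕ))) (Submodule.mem_span_singleton_self w))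
  exact hfix _ (Iges_le_Igt (by rwa [PNat.add_coe]) hτ')

variable (k M) in
def alphaPowTorsion (n : ℕ+) : AddSubgroup M where
  carrier := {z | ∀ᶠ s in Filter.atTop, ofInc k (alpha n ^ ((s : ℕ+) : ℕ)) • z = 0}
  zero_mem' := Filter.Eventually.of_forall fun _ => smul_zero _
  add_mem' hx hy := by
    filter_upwards [hx, hy] with s hxs hys
    rw [smul_add, hxs, hys, add_zero]
  neg_mem' hx := by
    filter_upwards [hx] with s hxs
    rw [smul_neg, hxs, neg_zero]

lemma augGrp_le_alphaPowTorsion (hsm : IsSmoothMod k M)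
    (hlf : ∀ x : M, ∃ (m : ℕ) (v : Fin m → M),
      ∀ y ∈ Submodule.span (IncAlg k) ({x} : Set M),
        ∃ c : Fin m → k, y = ∑ i, algebraMap k (IncAlg k) (c i) • v i)
    (n : ℕ+) : augGrp k M n ≤ alphaPowTorsion k M n := by
  refine AddSubgroup.closure_le _ |>.2 ?_
  rintro _ ⟨τ, hτ, w, rfl⟩
  obtain ⟨m, hm⟩ := exists_span_subset_invSet_Igt hsm (hlf w)
  filter_upwards [Filter.eventually_gt_atTop m.succPNat] with s hs
  have hms : m < n + s := by
    have := PNat.coe_lt_coe _ _ |>.2 hs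
    simp only [Nat.succPNat_coe] at this
    omega
  rw [smul_sub, alpha_pow_smul_smul_of_mem_Iges hms hm hτ, sub_self]

lemma smul_sub_mem_augGrp {n : ℕ+} {σ : IncM} (hσ : σ ∈ Iges n) (x : M) :
    ofInc k σ • x - x ∈ augGrp k M n :=
  AddSubgroup.subset_closure ⟨σ, hσ, x, rfl⟩

end Module

/-- For a smooth, locally finite length `k[I]`-module `M` and any
`n ≥ 1`, `M` is the internal direct sum of the invariants `M^{I_{≥n}}` and `𝔞_n M`;
equivalently the composite `M^{I_{≥n}} → M → M_{I_{≥n}}` is an isomorphism. -/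
theorem invariants_coinvariants_iso (k : Type*) [Field k]
    (M : Type*) [AddCommGroup M] [Module (IncAlg k) M]
    (hsm : IsSmoothMod k M)
    (hlf : ∀ x : M, ∃ (m : ℕ) (v : Fin m → M),
      ∀ y ∈ Submodule.span (IncAlg k) ({x} : Set M),
        ∃ c : Fin m → k, y = ∑ i, algebraMap k (IncAlg k) (c i) • v i)
    (n : ℕ+) :
    (∀ x : M, ∃ y ∈ invSet k M (Iges n), ∃ z ∈ augGrp k M n, x = y + z) ∧
    ∀ y ∈ invSet k M (Iges n), y ∈ augGrp k M n → y = 0 := by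
  refine ⟨fun x => ?_, fun y hyinv hyaug => ?_⟩
  · obtain ⟨m, hm⟩ := exists_span_subset_invSet_Igt hsm (hlf x)
    set g := alpha n ^ (m.succPNat : ℕ)
    have hmn : m < n + m.succPNat := by simp only [Nat.succPNat_coe]; omega
    refine ⟨ofInc k g • x, alpha_pow_smul_mem_invSet_Iges hmn hm, x - ofInc k g • x, ?_,
      (add_sub_cancel _ _).symm⟩
    rw [← neg_sub]
    exact neg_mem (smul_sub_mem_augGrp (pow_mem (alpha_mem_Iges le_rfl) _) x)
  · obtain ⟨s, hs⟩ := (augGrp_le_alphaPowTorsion hsm hlf n hyaug).exists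
    rwa [hyinv _ (pow_mem (alpha_mem_Iges le_rfl) _)] at hs
end
end
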